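/- Let {S_i}_{i∈I} be a finite, minimally defined collection of affine subspaces of ℝⁿ (no S_i contained in S_j for i ≠ j), and let U = ⋃_{i∈I} S_i. Then the set of smooth points of U is exactly the set of x ∈ ℝⁿ that belong to S_i for exactly one index i ∈ I. -/

import Mathlib

open scoped RealInnerProductSpace
open Matrix
open MeasureTheory

noncomputable section

/-- The normal space to `S` at `x`: the orthogonal complement of the tangent cone. -/
def NormalAt {E : Type*} [NormedAddCommGroup E] [InnerProductSpace ℝ E]
    (S : Set E) (x : E) : Set E :=
  {v | ∀ w ∈ tangentConeAt ℝ S x, ⟪v, w⟫ = 0}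

/-- `x` is a C²-smooth point of `S`: near `x`, `S` is the regular zero set of a C² map. -/
def SmoothPt {E : Type*} [NormedAddCommGroup E] [NormedSpace ℝ E]
    (S : Set E) (x : E) : Prop :=
  x ∈ S ∧ ∃ (U : Set E) (k : ℕ) (f : E → EuclideanSpace ℝ (Fin k)),
    IsOpen U ∧ x ∈ U ∧ ContDiffOn ℝ 2 f U ∧
    (∀ z ∈ U, Function.Surjective (fderivWithin ℝ f U z)) ∧
    S ∩ U = {z ∈ U | f z = 0}

/-- ED critical point of `y` on `S`. -/
def EDCritPt {E : Type*} [NormedAddCommGroup E] [InnerProductSpace ℝ E]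
    (S : Set E) (y x : E) : Prop :=
  SmoothPt S x ∧ (y - x) ∈ NormalAt S x

/-- Metric projection of `y` onto `S`. -/
def projSet {E : Type*} [NormedAddCommGroup E] (S : Set E) (y : E) : Set E :=
  {x ∈ S | dist y x = Metric.infDist y S}

/-- Matrices viewed as Euclidean space (Frobenius norm). -/
def toEuc {n t : ℕ} (X : Matrix (Fin n) (Fin t) ℝ) : EuclideanSpace ℝ (Fin n × Fin t) :=
  WithLp.toLp 2 (fun p : Fin n × Fin t => X p.1 p.2)

/-- Rectangular diagonal matrix. -/
def diagRect {n t : ℕ} (x : Fin n → ℝ) : Matrix (Fin n) (Fin t) ℝ :=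
  fun i j => if (j : ℕ) = (i : ℕ) then x i else 0

/-- Singular values of a rectangular matrix, in non-increasing order. -/
def singvals {n t : ℕ} (X : Matrix (Fin n) (Fin t) ℝ) : EuclideanSpace ℝ (Fin n) :=
  let g : Fin n → ℝ := fun j =>
    Real.sqrt ((Matrix.isHermitian_mul_conjTranspose_self X).eigenvalues j)
  WithLp.toLp 2 (fun i => g (Tuple.sort (fun j => -g j) i))

/-- A vector of signs. -/
def IsSignFn {n : ℕ} (ε : Fin n → ℝ) : Prop := ∀ i, ε i = 1 ∨ ε i = -1

/-- Absolutely symmetric set: invariant under all signed permutations of coordinates. -/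
def AbsSymm {n : ℕ} (S : Set (EuclideanSpace ℝ (Fin n))) : Prop :=
  ∀ (π : Equiv.Perm (Fin n)) (ε : Fin n → ℝ), IsSignFn ε →
    ∀ x : EuclideanSpace ℝ (Fin n), x ∈ S ↔ (WithLp.toLp 2 (fun i => ε i * x (π i)) : EuclideanSpace ℝ (Fin n)) ∈ S

/-- Orthogonally invariant set of matrices. -/
def OrthInv {n t : ℕ} (M : Set (Matrix (Fin n) (Fin t) ℝ)) : Prop :=
  ∀ (U : Matrix (Fin n) (Fin n) ℝ) (V : Matrix (Fin t) (Fin t) ℝ),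
    U * Uᵀ = 1 → V * Vᵀ = 1 → (fun X => U * X * Vᵀ) '' M = M

/-- Projection onto a set of matrices in Frobenius norm. -/
def matProj {n t : ℕ} (A : Set (Matrix (Fin n) (Fin t) ℝ)) (Y : Matrix (Fin n) (Fin t) ℝ) :
    Set (Matrix (Fin n) (Fin t) ℝ) :=
  {X ∈ A | dist (toEuc Y) (toEuc X) = Metric.infDist (toEuc Y) (toEuc '' A)}

/-- ED critical point in matrix space (with Frobenius inner product). -/
def MatEDCritPt {n t : ℕ} (M : Set (Matrix (Fin n) (Fin t) ℝ))
    (Y X : Matrix (Fin n) (Fin t) ℝ) : Prop :=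
  EDCritPt (toEuc '' M) (toEuc Y) (toEuc X)

/-!
Near a point lying in a single `S i`, the union coincides with `S i`, the regular zero set of an
affine map. Conversely, at a smooth point `x` the tangent cone of the union is a linear subspace:
by the implicit function theorem it is the kernel of the differential of a local defining map.
It is also the union of the directions of the `S i` through `x`. A real vector space is not a
finite union of proper subspaces, so the direction of some `S m` through `x` is the whole tangent
cone. Every `S i` through `x` then has its direction inside that of `S m`, hence `S i ⊆ S m`, and
minimality forces `i = m`.
-/

open Set Filter Topology
open scoped Pointwise

section TangentCone
variable {𝕜 E : Type*} [NontriviallyNormedField 𝕜] [NormedAddCommGroup E] [NormedSpace 𝕜 E]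

theorem tangentConeAt_union (s t : Set E) (x : E) :
    tangentConeAt 𝕜 (s ∪ t) x = tangentConeAt 𝕜 s x ∪ tangentConeAt 𝕜 t x := by
  ext y
  simp only [tangentConeAt_def, mem_ofPred_eq, mem_union, preimage_union, nhdsWithin_union,
    ← map₂_smul, map₂_sup_right, clusterPt_sup]

theorem tangentConeAt_biUnion {ι : Type*} (s : Finset ι) (t : ι → Set E) (x : E) :
    tangentConeAt 𝕜 (⋃ i ∈ s, t i) x = ⋃ i ∈ s, tangentConeAt 𝕜 (t i) x := by
  classical
  induction s using Finset.induction_on with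
  | empty => simp [tangentConeAt_def, ClusterPt, Filter.not_neBot.2]
  | insert i s _ ih => simp only [Finset.set_biUnion_insert, tangentConeAt_union, ih]

theorem tangentConeAt_iUnion {ι : Type*} [Finite ι] (t : ι → Set E) (x : E) :
    tangentConeAt 𝕜 (⋃ i, t i) x = ⋃ i, tangentConeAt 𝕜 (t i) x := by
  have := Fintype.ofFinite ι
  simpa using tangentConeAt_biUnion (𝕜 := 𝕜) Finset.univ t x

theorem tangentConeAt_subset_closure_smul_preimage (s : Set E) (x : E) :
    tangentConeAt 𝕜 s x ⊆ closure ((univ : Set 𝕜) • ((x + ·) ⁻¹' s)) := by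
  rw [tangentConeAt_eq_biInter_closure]
  exact (biInter_subset_of_mem univ_mem).trans (by rw [univ_inter])

theorem AffineSubspace.tangentConeAt_eq_direction [CompleteSpace 𝕜] [FiniteDimensional 𝕜 E]
    (A : AffineSubspace 𝕜 E) {x : E} (hx : x ∈ A) :
    tangentConeAt 𝕜 (A : Set E) x = A.direction := by
  have hpre : (x + ·) ⁻¹' (A : Set E) = A.direction := by
    ext v
    rw [mem_preimage, add_comm, ← vadd_eq_add, SetLike.mem_coe, SetLike.mem_coe,
      AffineSubspace.vadd_mem_iff_mem_direction v hx]
  apply Subset.antisymm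
  · refine (tangentConeAt_subset_closure_smul_preimage _ x).trans ?_
    rw [hpre]
    refine closure_minimal ?_ ?_
    · rintro _ ⟨c, -, v, hv, rfl⟩
      exact A.direction.smul_mem c hv
    · exact A.direction.closed_of_finiteDimensional
  · intro v hv
    refine mem_tangentConeAt_of_add_smul_mem (l := 𝓝[≠] (0 : 𝕜)) tendsto_id ?_
    refine Eventually.of_forall fun c => ?_
    rw [id, add_comm, ← vadd_eq_add]
    exact A.vadd_mem_of_mem_direction (A.direction.smul_mem c hv) hx

theorem tangentConeAt_iUnion_affineSubspace [CompleteSpace 𝕜] [FiniteDimensional 𝕜 E]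
    {ι : Type*} [Finite ι] (S : ι → AffineSubspace 𝕜 E) (x : E) :
    tangentConeAt 𝕜 (⋃ i, (S i : Set E)) x = ⋃ i : {i // x ∈ S i}, ((S i).direction : Set E) := by
  rw [tangentConeAt_iUnion, iUnion_subtype]
  refine iUnion_congr fun i => ?_
  by_cases hx : x ∈ S i
  · simp [(S i).tangentConeAt_eq_direction hx, hx]
  · have hcl : x ∉ closure (S i : Set E) := by rwa [(S i).closed_of_finiteDimensional.closure_eq]
    simp only [hx, iUnion_of_empty]
    exact eq_empty_of_forall_notMem fun v hv => hcl (mem_closure_of_nonempty_tangentConeAt ⟨v, hv⟩)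

end TangentCone

theorem Submodule.exists_eq_of_iUnion_eq {k E ι : Type*} [DivisionRing k] [Infinite k]
    [AddCommGroup E] [Module k E] [Finite ι] {p : ι → Submodule k E} {K : Submodule k E}
    (h : ⋃ i, (p i : Set E) = K) : ∃ i, p i = K := by
  have hle : ∀ i, p i ≤ K := fun i => by
    rw [← SetLike.coe_subset_coe, ← h]; exact subset_iUnion (fun i => (p i : Set E)) i
  have hcover : ⋃ i, ((p i).comap K.subtype : Set K) = univ := by
    refine eq_univ_of_forall fun v => ?_
    obtain ⟨i, hi⟩ := mem_iUnion.1 (h.symm ▸ v.2 : (v : E) ∈ ⋃ i, (p i : Set E))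
    exact mem_iUnion.2 ⟨i, hi⟩
  obtain ⟨i, hi⟩ := Subspace.exists_eq_top_of_iUnion_eq_univ hcover
  exact ⟨i, le_antisymm (hle i) fun v hv =>
    (hi ▸ Submodule.mem_top : (⟨v, hv⟩ : K) ∈ (p i).comap K.subtype)⟩

section LevelSet
variable {𝕜 E F : Type*} [NontriviallyNormedField 𝕜] [NormedAddCommGroup E] [NormedSpace 𝕜 E]
  [NormedAddCommGroup F] [NormedSpace 𝕜 F] {f : E → F} {f' : E →L[𝕜] F} {a : E}

theorem HasFDerivAt.tangentConeAt_preimage_subset_ker (hf : HasFDerivAt f f' a) :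
    tangentConeAt 𝕜 (f ⁻¹' {f a}) a ⊆ f'.ker := by
  intro v hv
  have hmaps := hf.hasFDerivWithinAt.mapsTo_tangent_cone hv
  have hsingle : tangentConeAt 𝕜 {f a} (f a) ⊆ 0 :=
    tangentConeAt_subset_zero (by rw [accPt_iff_nhds]; simpa using ⟨univ, univ_mem⟩)
  exact hsingle (tangentConeAt_mono (image_preimage_subset f {f a}) hmaps)

theorem HasStrictFDerivAt.ker_subset_tangentConeAt_preimage [CompleteSpace 𝕜] [CompleteSpace E]
    [FiniteDimensional 𝕜 F] (hf : HasStrictFDerivAt f f' a) (hf' : f'.range = ⊤) :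
    (f'.ker : Set E) ⊆ tangentConeAt 𝕜 (f ⁻¹' {f a}) a := by
  -- `g` maps a neighbourhood `W` of `0` in `ker f'` into the level set, with `g 0 = a` and
  -- derivative the inclusion of `ker f'`.
  set g := hf.implicitFunction f f' hf' (f a)
  set W : Set f'.ker := {y | f (g y) = f a}
  have hW : W ∈ 𝓝 0 :=
    (continuous_const.prodMk continuous_id).tendsto' (0 : f'.ker) (f a, 0) rfl
      |>.eventually (hf.map_implicitFunction_eq hf')
  intro v hv
  have hv' : (⟨v, hv⟩ : f'.ker) ∈ tangentConeAt 𝕜 W 0 := by simp [tangentConeAt_of_mem_nhds hW]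
  have hmaps := (hf.to_implicitFunction hf').hasFDerivAt.hasFDerivWithinAt.mapsTo_tangent_cone hv'
  rw [hf.implicitFunction_apply_image hf'] at hmaps
  exact tangentConeAt_mono (image_subset_iff.2 fun y hy => hy) hmaps

end LevelSet

section SmoothPt
variable {E : Type*} [NormedAddCommGroup E] [NormedSpace ℝ E] {s t W : Set E} {x : E}

theorem SmoothPt.of_inter_eq_inter (h : SmoothPt s x) (hW : IsOpen W) (hxW : x ∈ W)
    (hst : s ∩ W = t ∩ W) : SmoothPt t x := by
  obtain ⟨hxs, U, k, f, hU, hxU, hf, hsurj, hset⟩ := h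
  refine ⟨(hst ▸ ⟨hxs, hxW⟩ : x ∈ t ∩ W).1, U ∩ W, k, f, hU.inter hW, ⟨hxU, hxW⟩,
    hf.mono inter_subset_left, fun z hz => ?_, ?_⟩
  · rw [fderivWithin_of_isOpen (hU.inter hW) hz, ← fderivWithin_of_isOpen hU hz.1]
    exact hsurj z hz.1
  · ext z
    have hs := congrArg (z ∈ ·) hset
    have ht := congrArg (z ∈ ·) hst
    simp only [mem_inter_iff, mem_ofPred_eq, eq_iff_iff] at hs ht ⊢
    tauto

theorem SmoothPt.exists_tangentConeAt_eq [CompleteSpace E] (h : SmoothPt s x) :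
    ∃ K : Submodule ℝ E, tangentConeAt ℝ s x = K := by
  obtain ⟨hxs, U, k, f, hU, hxU, hf, hsurj, hset⟩ := h
  have hfx : f x = 0 := (hset ▸ ⟨hxs, hxU⟩ : x ∈ {z ∈ U | f z = 0}).2
  have hstrict : HasStrictFDerivAt f (fderiv ℝ f x) x :=
    (hf.contDiffAt (hU.mem_nhds hxU)).hasStrictFDerivAt (by norm_num)
  have hrange : (fderiv ℝ f x).range = ⊤ := by
    rw [LinearMap.range_eq_top]
    simpa [fderivWithin_of_isOpen hU hxU] using hsurj x hxU
  refine ⟨(fderiv ℝ f x).ker, ?_⟩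
  have hlevel : s ∩ U = f ⁻¹' {f x} ∩ U := by
    rw [hset, hfx]; ext z; simp [and_comm]
  rw [← tangentConeAt_inter_nhds (hU.mem_nhds hxU), hlevel,
    tangentConeAt_inter_nhds (hU.mem_nhds hxU)]
  exact Subset.antisymm hstrict.hasFDerivAt.tangentConeAt_preimage_subset_ker
    (hstrict.ker_subset_tangentConeAt_preimage hrange)

theorem Submodule.exists_surjective_ker_eq [FiniteDimensional ℝ E] (p : Submodule ℝ E) :
    ∃ (k : ℕ) (g : E →L[ℝ] EuclideanSpace ℝ (Fin k)), Function.Surjective g ∧ g.ker = p := by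
  let e : (E ⧸ p) ≃ₗ[ℝ] EuclideanSpace ℝ (Fin (Module.finrank ℝ (E ⧸ p))) :=
    LinearEquiv.ofFinrankEq _ _ (by simp)
  refine ⟨_, (e.toLinearMap ∘ₗ p.mkQ).toContinuousLinearMap,
    e.surjective.comp p.mkQ_surjective, ?_⟩
  simp [LinearEquiv.ker_comp]

theorem AffineSubspace.smoothPt [FiniteDimensional ℝ E] (A : AffineSubspace ℝ E) (hx : x ∈ A) :
    SmoothPt (A : Set E) x := by
  obtain ⟨k, g, hg, hker⟩ := A.direction.exists_surjective_ker_eq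
  have hderiv : ∀ z, HasFDerivAt (fun z => g (z - x)) g z := fun z =>
    (g.hasFDerivAt.comp z ((hasFDerivAt_id z).sub_const x)).congr_fderiv g.comp_id
  refine ⟨hx, univ, k, fun z => g (z - x), isOpen_univ, mem_univ x,
    (g.contDiff.comp (contDiff_id.sub contDiff_const)).contDiffOn, fun z _ => ?_, ?_⟩
  · rwa [fderivWithin_univ, (hderiv z).fderiv]
  · ext z
    rw [inter_univ, SetLike.mem_coe, ← AffineSubspace.vsub_right_mem_direction_iff_mem hx z, ← hker]
    simp

end SmoothPt

theorem smooth_points_of_affine_complex_general {n : ℕ} {ι : Type} [Fintype ι]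
    (S : ι → AffineSubspace ℝ (EuclideanSpace ℝ (Fin n)))
    (hmin : ∀ i j, i ≠ j →
      ¬ ((S i : Set (EuclideanSpace ℝ (Fin n))) ⊆ (S j : Set (EuclideanSpace ℝ (Fin n))))) :
    {x | SmoothPt (⋃ i, (S i : Set (EuclideanSpace ℝ (Fin n)))) x}
      = {x | ∃! i, x ∈ S i} := by
  ext x
  constructor
  · intro hx
    obtain ⟨K, hK⟩ := hx.exists_tangentConeAt_eq
    rw [tangentConeAt_iUnion_affineSubspace] at hK
    obtain ⟨⟨m, hxm⟩, hm⟩ := Submodule.exists_eq_of_iUnion_eq hK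
    refine ⟨m, hxm, fun i hxi => by_contra fun hne => hmin i m hne ?_⟩
    have hdir : (S i).direction ≤ (S m).direction := by
      rw [hm, ← SetLike.coe_subset_coe, ← hK]
      exact fun v hv => mem_iUnion.2 ⟨⟨i, hxi⟩, hv⟩
    rw [← AffineSubspace.mk'_eq hxi, ← AffineSubspace.mk'_eq hxm]
    exact (AffineSubspace.mk'_le_mk'_iff x).2 hdir
  · rintro ⟨i, hxi, huniq⟩
    have hclosed : IsClosed (⋃ j ∈ {j | j ≠ i}, (S j : Set (EuclideanSpace ℝ (Fin n)))) :=
      (toFinite _).isClosed_biUnion fun j _ => (S j).closed_of_finiteDimensional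
    refine ((S i).smoothPt hxi).of_inter_eq_inter hclosed.isOpen_compl ?_ ?_
    · simpa using fun j hj hxj => hj (huniq j hxj)
    · ext z
      simp only [mem_inter_iff, mem_iUnion, mem_compl_iff, mem_ofPred_eq, not_exists]
      refine ⟨fun hz => ⟨⟨i, hz.1⟩, hz.2⟩, fun ⟨⟨j, hzj⟩, hz⟩ => ⟨?_, hz⟩⟩
      by_contra hzi
      exact hz j (fun hji => hzi (hji ▸ hzj)) hzj

/-- for a finite minimally defined collection of (nonempty) affine subspaces,
the smooth points of the union are exactly the points lying in exactly one member. -/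
theorem smooth_points_of_affine_complex {n : ℕ} {ι : Type} [Fintype ι]
    (S : ι → AffineSubspace ℝ (EuclideanSpace ℝ (Fin n)))
    (hne : ∀ i, (S i : Set (EuclideanSpace ℝ (Fin n))).Nonempty)
    (hmin : ∀ i j, i ≠ j →
      ¬ ((S i : Set (EuclideanSpace ℝ (Fin n))) ⊆ (S j : Set (EuclideanSpace ℝ (Fin n))))) :
    {x | SmoothPt (⋃ i, (S i : Set (EuclideanSpace ℝ (Fin n)))) x}
      = {x | ∃! i, x ∈ S i} :=
  smooth_points_of_affine_complex_general S hmin
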